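/- arXiv:1103.4198 — 2 statements merged into one kernel-verified Lean document; each statement's English description precedes it below -/
import Mathlib

section
/- Let 0 < ρ₁ < ρ₂ < … < ρ_K be real numbers and for each j let T_j(t) = ∑_{i=1}^{N_j} (α_i^{(j)} cos(y_i^{(j)} t) + β_i^{(j)} sin(y_i^{(j)} t)) be a finite real trigonometric polynomial, where the frequencies y_1^{(1)}, …, y_{N_1}^{(1)} of T₁ are all nonzero and satisfy y_i^{(1)} ≠ ± y_j^{(1)} for i ≠ j. If the function e*(t) = ∑_{j=1}^K e^{−ρ_j t} T_j(t) satisfies e*(t) ≥ 0 for all t ≥ 0, then T₁ is identically zero (all α_i^{(1)} and β_i^{(1)} vanish). -/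
/-!
Multiplying by `e^{ρ₁ t}`, the hypothesis says `T₁ + r ≥ 0` on `[0, ∞)`, where `r` is a sum of
exponentially decaying terms and hence integrable on `(0, ∞)`. Pass to Cesàro means
`M F = lim_{T → ∞} T⁻¹ ∫₀ᵀ F`: integrable functions and sinusoids of nonzero frequency have mean
zero, so the frequency conditions give `M T₁ = 0` and, by orthogonality,
`M (T₁²) = S := ∑ᵢ (αᵢ² + βᵢ²) / 2`. With `C ≥ sup |T₁|`, averaging the pointwise inequality
`(T₁ + r) T₁ ≤ C (T₁ + r)` gives `S ≤ 0`, so every coefficient of `T₁` vanishes.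
-/

open Filter Real Set MeasureTheory Topology Finset

def HasCesaroMean (F : ℝ → ℝ) (m : ℝ) : Prop :=
  Tendsto (fun T => (∫ t in (0:ℝ)..T, F t) / T) atTop (𝓝 m)

namespace HasCesaroMean

variable {F G : ℝ → ℝ} {m n : ℝ}

theorem of_abs_integral_le (M : ℝ) (h : ∀ T, 0 ≤ T → |∫ t in (0:ℝ)..T, F t| ≤ M) :
    HasCesaroMean F 0 := by
  apply squeeze_zero_norm' (a := fun T => M / T)
  · filter_upwards [eventually_gt_atTop 0] with T hT
    rw [norm_eq_abs, abs_div, abs_of_pos hT]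
    gcongr
    exact h T hT.le
  · simpa [div_eq_mul_inv] using tendsto_inv_atTop_zero.const_mul M

theorem const (c : ℝ) : HasCesaroMean (fun _ => c) c := by
  refine tendsto_const_nhds.congr' ?_
  filter_upwards [eventually_gt_atTop 0] with T hT
  simp [hT.ne']

theorem const_mul (c : ℝ) (h : HasCesaroMean F m) : HasCesaroMean (fun t => c * F t) (c * m) := by
  simpa only [HasCesaroMean, intervalIntegral.integral_const_mul, mul_div_assoc] using
    Tendsto.const_mul c h

theorem add (hF : ∀ T, IntervalIntegrable F volume 0 T) (hG : ∀ T, IntervalIntegrable G volume 0 T)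
    (h₁ : HasCesaroMean F m) (h₂ : HasCesaroMean G n) :
    HasCesaroMean (fun t => F t + G t) (m + n) := by
  simpa only [HasCesaroMean, intervalIntegral.integral_add (hF _) (hG _), add_div] using
    Tendsto.add h₁ h₂

theorem sum {ι : Type*} (s : Finset ι) {F : ι → ℝ → ℝ} {m : ι → ℝ}
    (hF : ∀ i ∈ s, ∀ T, IntervalIntegrable (F i) volume 0 T)
    (h : ∀ i ∈ s, HasCesaroMean (F i) (m i)) :
    HasCesaroMean (fun t => ∑ i ∈ s, F i t) (∑ i ∈ s, m i) := by
  classical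
  induction s using Finset.induction_on with
  | empty => simpa using const 0
  | insert a s ha ih =>
    simp only [Finset.sum_insert ha]
    refine add (hF a (mem_insert_self a s)) (fun T => ?_) (h a (mem_insert_self a s))
      (ih (fun i hi => hF i (mem_insert_of_mem hi)) (fun i hi => h i (mem_insert_of_mem hi)))
    simpa only [Finset.sum_fn] using
      IntervalIntegrable.sum s fun i hi => hF i (mem_insert_of_mem hi) T

theorem le (hF : ∀ T, IntervalIntegrable F volume 0 T) (hG : ∀ T, IntervalIntegrable G volume 0 T)
    (hFG : ∀ t, 0 ≤ t → F t ≤ G t) (h₁ : HasCesaroMean F m) (h₂ : HasCesaroMean G n) : m ≤ n := by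
  refine le_of_tendsto_of_tendsto h₁ h₂ ?_
  filter_upwards [eventually_ge_atTop 0] with T hT
  gcongr
  exact intervalIntegral.integral_mono_on hT (hF T) (hG T) fun t ht => hFG t ht.1

end HasCesaroMean

theorem hasCesaroMean_zero_of_integrableOn {F : ℝ → ℝ} (hF : IntegrableOn F (Ioi 0)) :
    HasCesaroMean F 0 := by
  refine .of_abs_integral_le (∫ t in Ioi 0, |F t|) fun T hT => ?_
  rw [intervalIntegral.integral_of_le hT]
  calc |∫ t in Ioc 0 T, F t| ≤ ∫ t in Ioc 0 T, |F t| := abs_integral_le_integral_abs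
    _ ≤ ∫ t in Ioi 0, |F t| :=
      setIntegral_mono_set hF.abs (.of_forall fun _ => abs_nonneg _)
        Ioc_subset_Ioi_self.eventuallyLE

theorem hasCesaroMean_cos {ω : ℝ} (hω : ω ≠ 0) : HasCesaroMean (fun t => cos (ω * t)) 0 := by
  refine .of_abs_integral_le (|ω⁻¹| * 2) fun T _ => ?_
  rw [intervalIntegral.integral_comp_mul_left (fun x => cos x) hω, mul_zero, integral_cos,
    smul_eq_mul, abs_mul, sin_zero, sub_zero]
  gcongr
  linarith [abs_sin_le_one (ω * T)]

theorem hasCesaroMean_sin {ω : ℝ} (hω : ω ≠ 0) : HasCesaroMean (fun t => sin (ω * t)) 0 := by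
  refine .of_abs_integral_le (|ω⁻¹| * 2) fun T _ => ?_
  rw [intervalIntegral.integral_comp_mul_left (fun x => sin x) hω, mul_zero, integral_sin,
    smul_eq_mul, abs_mul, cos_zero]
  gcongr
  calc |1 - cos (ω * T)| ≤ |1| + |cos (ω * T)| := abs_sub _ _
    _ ≤ 2 := by linarith [abs_cos_le_one (ω * T), abs_one (α := ℝ)]

noncomputable def sinusoid (a b ω t : ℝ) : ℝ := a * cos (ω * t) + b * sin (ω * t)

section Sinusoid

variable {a b c d ω ν : ℝ}

@[fun_prop]
theorem continuous_sinusoid : Continuous (sinusoid a b ω) := by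
  unfold sinusoid; fun_prop

theorem intervalIntegrable_sinusoid (T : ℝ) : IntervalIntegrable (sinusoid a b ω) volume 0 T :=
  continuous_sinusoid.intervalIntegrable 0 T

theorem abs_sinusoid_le (t : ℝ) : |sinusoid a b ω t| ≤ |a| + |b| := by
  unfold sinusoid
  calc |a * cos (ω * t) + b * sin (ω * t)| ≤ |a| * |cos (ω * t)| + |b| * |sin (ω * t)| := by
        rw [← abs_mul, ← abs_mul]; exact abs_add_le _ _
    _ ≤ |a| * 1 + |b| * 1 := by gcongr <;> simp only [abs_cos_le_one, abs_sin_le_one]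
    _ = |a| + |b| := by ring

theorem sinusoid_zero_freq (t : ℝ) : sinusoid a b 0 t = a := by
  simp [sinusoid]

theorem sinusoid_mul_sinusoid (t : ℝ) :
    sinusoid a b ω t * sinusoid c d ν t =
      sinusoid ((a * c + b * d) / 2) ((b * c - a * d) / 2) (ω - ν) t +
        sinusoid ((a * c - b * d) / 2) ((b * c + a * d) / 2) (ω + ν) t := by
  simp only [sinusoid, sub_mul, add_mul, cos_sub, cos_add, sin_sub, sin_add]
  ring

theorem hasCesaroMean_sinusoid (hω : ω ≠ 0) : HasCesaroMean (sinusoid a b ω) 0 := by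
  convert ((hasCesaroMean_cos hω).const_mul a).add
    (fun T => (by fun_prop : Continuous fun t => a * cos (ω * t)).intervalIntegrable 0 T)
    (fun T => (by fun_prop : Continuous fun t => b * sin (ω * t)).intervalIntegrable 0 T)
    ((hasCesaroMean_sin hω).const_mul b) using 1
  · rfl
  · ring

theorem hasCesaroMean_sinusoid_mul (h₁ : ω ≠ ν) (h₂ : ω ≠ -ν) :
    HasCesaroMean (fun t => sinusoid a b ω t * sinusoid c d ν t) 0 := by
  simp only [sinusoid_mul_sinusoid]
  simpa using HasCesaroMean.add intervalIntegrable_sinusoid intervalIntegrable_sinusoid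
    (hasCesaroMean_sinusoid (sub_ne_zero.2 h₁)) (hasCesaroMean_sinusoid (by grind))

theorem hasCesaroMean_sinusoid_mul_self (hω : ω ≠ 0) :
    HasCesaroMean (fun t => sinusoid a b ω t * sinusoid a b ω t) ((a ^ 2 + b ^ 2) / 2) := by
  simp only [sinusoid_mul_sinusoid, sub_self, sinusoid_zero_freq]
  simpa [sq] using HasCesaroMean.add (fun T => intervalIntegrable_const) intervalIntegrable_sinusoid
    (.const _) (hasCesaroMean_sinusoid (a := (a * a - b * b) / 2) (b := (b * a + a * b) / 2)
      (by simpa using hω : ω + ω ≠ 0))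

end Sinusoid

noncomputable def trigPoly {ι : Type*} [Fintype ι] (a b ω : ι → ℝ) (t : ℝ) : ℝ :=
  ∑ i, sinusoid (a i) (b i) (ω i) t

section TrigPoly

variable {ι : Type*} [Fintype ι] {a b ω : ι → ℝ}

@[fun_prop]
theorem continuous_trigPoly : Continuous (trigPoly a b ω) := by
  unfold trigPoly; fun_prop

theorem abs_trigPoly_le (t : ℝ) : |trigPoly a b ω t| ≤ ∑ i, (|a i| + |b i|) :=
  (abs_sum_le_sum_abs _ _).trans (sum_le_sum fun _ _ => abs_sinusoid_le t)

theorem hasCesaroMean_trigPoly (hω : ∀ i, ω i ≠ 0) : HasCesaroMean (trigPoly a b ω) 0 := by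
  unfold trigPoly
  simpa using HasCesaroMean.sum univ (fun _ _ => intervalIntegrable_sinusoid)
    fun i _ => hasCesaroMean_sinusoid (hω i)

theorem hasCesaroMean_trigPoly_mul_self (hω : ∀ i, ω i ≠ 0)
    (hω' : ∀ i j, i ≠ j → ω i ≠ ω j ∧ ω i ≠ -ω j) :
    HasCesaroMean (fun t => trigPoly a b ω t * trigPoly a b ω t)
      (∑ i, (a i ^ 2 + b i ^ 2) / 2) := by
  classical
  have hterm : ∀ i k, HasCesaroMean
      (fun t => sinusoid (a i) (b i) (ω i) t * sinusoid (a k) (b k) (ω k) t)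
      (if i = k then (a i ^ 2 + b i ^ 2) / 2 else 0) := by
    intro i k
    split_ifs with h
    · subst h; exact hasCesaroMean_sinusoid_mul_self (hω i)
    · exact hasCesaroMean_sinusoid_mul (hω' i k h).1 (hω' i k h).2
  have := HasCesaroMean.sum univ (fun _ _ T => Continuous.intervalIntegrable (by fun_prop) 0 T)
    fun i _ => HasCesaroMean.sum univ (fun _ _ T => Continuous.intervalIntegrable (by fun_prop) 0 T)
      fun k _ => hterm i k
  simpa [trigPoly, Finset.sum_mul_sum] using this

end TrigPoly

theorem trigPoly_coeff_eq_zero_of_nonneg_add {ι : Type*} [Fintype ι] {a b ω : ι → ℝ}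
    {r : ℝ → ℝ} (hω : ∀ i, ω i ≠ 0) (hω' : ∀ i j, i ≠ j → ω i ≠ ω j ∧ ω i ≠ -ω j)
    (hr : Continuous r) (hr_int : IntegrableOn r (Ioi 0))
    (hnonneg : ∀ t, 0 ≤ t → 0 ≤ trigPoly a b ω t + r t) (i : ι) : a i = 0 ∧ b i = 0 := by
  set P := trigPoly a b ω
  set C := ∑ i, (|a i| + |b i|)
  set S := ∑ i, (a i ^ 2 + b i ^ 2) / 2
  have hP_le : ∀ t, P t ≤ C := fun t => (le_abs_self _).trans (abs_trigPoly_le t)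
  have hrP : HasCesaroMean (fun t => r t * P t) 0 := hasCesaroMean_zero_of_integrableOn <|
    hr_int.mul_bdd continuous_trigPoly.aestronglyMeasurable (ae_of_all _ abs_trigPoly_le)
  have hmean_mul : HasCesaroMean (fun t => (P t + r t) * P t) S := by
    simpa [add_mul] using (hasCesaroMean_trigPoly_mul_self hω hω').add
      (fun T => Continuous.intervalIntegrable (by fun_prop) 0 T)
      (fun T => Continuous.intervalIntegrable (by fun_prop) 0 T) hrP
  have hmean_const_mul : HasCesaroMean (fun t => C * (P t + r t)) 0 := by
    simpa using ((hasCesaroMean_trigPoly hω).add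
      (fun T => Continuous.intervalIntegrable (by fun_prop) 0 T)
      (fun T => hr.intervalIntegrable 0 T)
      (hasCesaroMean_zero_of_integrableOn hr_int)).const_mul C
  have hS : S ≤ 0 :=
    hmean_mul.le (fun T => Continuous.intervalIntegrable (by fun_prop) 0 T)
      (fun T => Continuous.intervalIntegrable (by fun_prop) 0 T)
      (fun t ht => by rw [mul_comm C]; exact mul_le_mul_of_nonneg_left (hP_le t) (hnonneg t ht))
      hmean_const_mul
  have hsq : (a i ^ 2 + b i ^ 2) / 2 = 0 :=
    (sum_eq_zero_iff_of_nonneg fun _ _ => by positivity).1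
      (hS.antisymm (sum_nonneg fun _ _ => by positivity)) i (mem_univ i)
  constructor <;> nlinarith [sq_nonneg (a i), sq_nonneg (b i)]

theorem exp_mul_sum_exp_neg_mul {ι : Type*} [Fintype ι] [DecidableEq ι] (ρ f : ι → ℝ) (j₀ : ι)
    (t : ℝ) :
    exp (ρ j₀ * t) * ∑ j, exp (-ρ j * t) * f j =
      f j₀ + ∑ j ∈ univ.erase j₀, exp (-(ρ j - ρ j₀) * t) * f j := by
  rw [mul_sum, ← add_sum_erase _ _ (mem_univ j₀)]
  congr 1
  · rw [← mul_assoc, ← exp_add, neg_mul, add_neg_cancel, exp_zero, one_mul]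
  · refine sum_congr rfl fun j _ => ?_
    rw [← mul_assoc, ← exp_add]
    ring_nf

theorem leading_trig_block_of_nonneg_sum_eq_zero_general
    (K : ℕ) (hK : 0 < K) (ρ : Fin K → ℝ) (hρmono : StrictMono ρ)
    (N : Fin K → ℕ) (y α β : (j : Fin K) → Fin (N j) → ℝ)
    (hy : ∀ i, y ⟨0, hK⟩ i ≠ 0)
    (hy' : ∀ i j, i ≠ j → y ⟨0, hK⟩ i ≠ y ⟨0, hK⟩ j ∧ y ⟨0, hK⟩ i ≠ -(y ⟨0, hK⟩ j))
    (hpos : ∀ t : ℝ, 0 ≤ t →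
      0 ≤ ∑ j, Real.exp (-(ρ j) * t) *
        ∑ i, (α j i * Real.cos (y j i * t) + β j i * Real.sin (y j i * t))) :
    ∀ i, α ⟨0, hK⟩ i = 0 ∧ β ⟨0, hK⟩ i = 0 := by
  classical
  set j₀ : Fin K := ⟨0, hK⟩
  set r : ℝ → ℝ := fun t =>
    ∑ j ∈ univ.erase j₀, exp (-(ρ j - ρ j₀) * t) * trigPoly (α j) (β j) (y j) t
  have hgap : ∀ j ∈ univ.erase j₀, 0 < ρ j - ρ j₀ := fun j hj =>
    sub_pos.2 (hρmono (lt_of_le_of_ne (Fin.le_def.2 (Nat.zero_le _)) (ne_of_mem_erase hj).symm))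
  have hr_int : IntegrableOn r (Ioi 0) := integrable_finsetSum _ fun j hj =>
    (exp_neg_integrableOn_Ioi 0 (hgap j hj)).mul_bdd continuous_trigPoly.aestronglyMeasurable
      (ae_of_all _ abs_trigPoly_le)
  refine trigPoly_coeff_eq_zero_of_nonneg_add hy hy' (r := r) (by fun_prop) hr_int fun t ht => ?_
  rw [← exp_mul_sum_exp_neg_mul ρ (fun j => trigPoly (α j) (β j) (y j) t) j₀ t]
  exact mul_nonneg (exp_pos _).le (hpos t ht)

/-- Let `0 < ρ₁ < ρ₂ < … < ρ_K` and, for each `j`, let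
`T_j(t) = ∑ᵢ (α_i⁽ʲ⁾ cos(y_i⁽ʲ⁾ t) + β_i⁽ʲ⁾ sin(y_i⁽ʲ⁾ t))` be a finite trigonometric
polynomial, where the frequencies of `T₁` are nonzero and pairwise distinct up to sign.
If `e*(t) = ∑ⱼ e^{-ρⱼ t} T_j(t)` is nonnegative for all `t ≥ 0`, then `T₁` is identically
zero, i.e. all the coefficients `α_i⁽¹⁾`, `β_i⁽¹⁾` vanish. -/
theorem leading_trig_block_of_nonneg_sum_eq_zero
    (K : ℕ) (hK : 0 < K) (ρ : Fin K → ℝ) (hρpos : ∀ j, 0 < ρ j) (hρmono : StrictMono ρ)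
    (N : Fin K → ℕ) (y α β : (j : Fin K) → Fin (N j) → ℝ)
    (hy : ∀ i, y ⟨0, hK⟩ i ≠ 0)
    (hy' : ∀ i j, i ≠ j → y ⟨0, hK⟩ i ≠ y ⟨0, hK⟩ j ∧ y ⟨0, hK⟩ i ≠ -(y ⟨0, hK⟩ j))
    (hpos : ∀ t : ℝ, 0 ≤ t →
      0 ≤ ∑ j, Real.exp (-(ρ j) * t) *
        ∑ i, (α j i * Real.cos (y j i * t) + β j i * Real.sin (y j i * t))) :
    ∀ i, α ⟨0, hK⟩ i = 0 ∧ β ⟨0, hK⟩ i = 0 :=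
  leading_trig_block_of_nonneg_sum_eq_zero_general K hK ρ hρmono N y α β hy hy' hpos
end

section
/- Let μ be a finite signed regular Borel measure on [0,∞). Then sup_{e ∈ C₀(ℝ₊)} ( ∫₀^∞ e dμ − (1/2)(sup_{t≥0} e(t) − inf_{t≥0} e(t)) ) equals 0 if μ₊([0,∞)) ≤ 1/2 and μ₋([0,∞)) ≥ −1/2, and equals +∞ otherwise. Equivalently, the Young–Fenchel conjugate of the fluctuation functional f_fl(e) = (1/2)(sup e − inf e) on C₀(ℝ₊) is the indicator function of {μ : μ₊([0,∞)) ≤ 1/2, μ₋([0,∞)) ≥ −1/2}. -/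
/-!
Every `e ∈ C₀(ℝ₊)` satisfies `inf e ≤ 0 ≤ sup e`, so if both parts of `μ` have mass at most `1/2`
then `∫ e dμ₊ ≤ ½ sup e` and `∫ e d|μ₋| ≥ ½ inf e`; the zero function attains `0`.
If instead `μ₊` (say) has mass `½ + ε`, the mutual singularity of `μ₊` and `μ₋` together with
regularity gives a compact `K` carrying almost all of `μ₊` and an open `U ⊇ K` of small
`|μ₋|`-mass. A Urysohn function `f` with values in `[0, 1]`, equal to `1` on `K` and supported
in `U`, pairs with `μ` to more than `½ + ε/2`, while the fluctuation of `c f` is at most `c/2`;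
letting `c → ∞` makes the supremum infinite.
-/

open MeasureTheory
open scoped NNReal

/-- The space `C₀(ℝ₊)` of continuous functions on `[0,∞)` vanishing at infinity. -/
def CZero : Type := {e : ℝ≥0 → ℝ // Continuous e ∧ Filter.Tendsto e Filter.atTop (nhds 0)}

/-- The pairing `∫₀^∞ e dμ` of a bounded measurable function with a finite signed
measure `μ = μ₊ + μ₋` (with `μ₋ ≤ 0`), computed via the Jordan decomposition. -/
noncomputable def pairing (μ : SignedMeasure ℝ≥0) (e : ℝ≥0 → ℝ) : ℝ :=
  (∫ t, e t ∂μ.toJordanDecomposition.posPart) - ∫ t, e t ∂μ.toJordanDecomposition.negPart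

open Filter Set
open scoped BoundedContinuousFunction

lemma ciSup_sub_ciInf_le_of_mem_Icc {ι : Type*} [Nonempty ι] {e : ι → ℝ} {a b : ℝ}
    (h : ∀ i, e i ∈ Icc a b) : (⨆ i, e i) - ⨅ i, e i ≤ b - a :=
  sub_le_sub (ciSup_le fun i ↦ (h i).2) (le_ciInf fun i ↦ (h i).1)

lemma EReal.iSup_coe_eq_top_of_forall_exists_lt {ι : Sort*} {g : ι → ℝ}
    (h : ∀ M : ℝ, ∃ i, M < g i) : ⨆ i, (g i : EReal) = ⊤ := by
  refine iSup_eq_top.2 fun b hb ↦ ?_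
  obtain ⟨M, hbM, -⟩ := EReal.lt_iff_exists_real_btwn.1 hb
  obtain ⟨i, hi⟩ := h M
  exact ⟨i, hbM.trans (EReal.coe_lt_coe_iff.2 hi)⟩

section

variable {X : Type*} [TopologicalSpace X] [MeasurableSpace X] [OpensMeasurableSpace X]
  {P N : Measure X}

lemma BoundedContinuousFunction.integral_sub_integral_le_half_ciSup_sub_ciInf
    [IsFiniteMeasure P] [IsFiniteMeasure N] (e : X →ᵇ ℝ)
    (hP : P.real univ ≤ 1 / 2) (hN : N.real univ ≤ 1 / 2)
    (hsup : 0 ≤ ⨆ x, e x) (hinf : ⨅ x, e x ≤ 0) :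
    ∫ x, e x ∂P - ∫ x, e x ∂N ≤ 1 / 2 * ((⨆ x, e x) - ⨅ x, e x) := by
  have hP_le : ∫ x, e x ∂P ≤ P.real univ * ⨆ x, e x := by
    simpa using integral_mono (e.integrable P) (integrable_const _)
      fun x ↦ le_ciSup e.isBounded_range.bddAbove x
  have hN_ge : N.real univ * ⨅ x, e x ≤ ∫ x, e x ∂N := by
    simpa using integral_mono (integrable_const _) (e.integrable N)
      fun x ↦ ciInf_le e.isBounded_range.bddBelow x
  nlinarith [measureReal_nonneg (μ := P) (s := univ), measureReal_nonneg (μ := N) (s := univ)]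

theorem exists_continuous_integral_separation_of_mutuallySingular [T2Space X]
    [LocallyCompactSpace X] [IsFiniteMeasure P] [P.InnerRegularCompactLTTop] [N.OuterRegular]
    (hPN : P ⟂ₘ N) {δ : ℝ} (hδ : 0 < δ) :
    ∃ f : C(X, ℝ), HasCompactSupport f ∧ (∀ x, f x ∈ Icc 0 1) ∧
      P.real univ ≤ ∫ x, f x ∂P + δ ∧ ∫ x, f x ∂N < δ := by
  obtain ⟨S, hS, hPS, hNS⟩ := hPN
  have hδ' : 0 < ENNReal.ofReal δ := ENNReal.ofReal_pos.2 hδ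
  obtain ⟨K, hKS, hK, hPK⟩ := hS.compl.exists_isCompact_lt_add (measure_ne_top P _) hδ'.ne'
  obtain ⟨U, hKU, hU, hNU⟩ :=
    K.exists_isOpen_lt_of_lt _ ((measure_mono_null hKS hNS).trans_lt hδ')
  obtain ⟨f, hfK, hfU, hf, hf01⟩ := exists_continuous_one_zero_of_isCompact hK
    hU.isClosed_compl (disjoint_compl_right_iff_subset.2 hKU)
  have hPf : P K ≤ ENNReal.ofReal (∫ x, f x ∂P) :=
    (f.continuous.integrable_of_hasCompactSupport hf).measure_le_integral
      (ae_of_all _ fun x ↦ (hf01 x).1) fun x hx ↦ (hfK hx).ge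
  have hNf : ENNReal.ofReal (∫ x, f x ∂N) ≤ N U :=
    integral_le_measure (fun x _ ↦ (hf01 x).2) fun x hx ↦ (hfU hx).le
  refine ⟨f, hf, hf01, ENNReal.toReal_le_of_le_ofReal
    (add_nonneg (integral_nonneg fun x ↦ (hf01 x).1) hδ.le) ?_,
    (ENNReal.ofReal_lt_ofReal_iff hδ).1 (hNf.trans_lt hNU)⟩
  calc P univ = P Sᶜ := by rw [measure_compl hS (measure_ne_top P S), hPS, tsub_zero]
    _ ≤ P K + ENNReal.ofReal δ := hPK.le
    _ ≤ ENNReal.ofReal (∫ x, f x ∂P) + ENNReal.ofReal δ := by gcongr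
    _ = ENNReal.ofReal (∫ x, f x ∂P + δ) :=
      (ENNReal.ofReal_add (integral_nonneg fun x ↦ (hf01 x).1) hδ.le).symm

theorem exists_continuous_integral_sub_integral_gt [T2Space X] [LocallyCompactSpace X]
    [IsFiniteMeasure P] [P.InnerRegularCompactLTTop] [N.OuterRegular] (hPN : P ⟂ₘ N)
    (hP : 1 / 2 < P.real univ) (M : ℝ) :
    ∃ (f : C(X, ℝ)) (c : ℝ), HasCompactSupport f ∧ (∀ x, f x ∈ Icc 0 c) ∧
      M + c / 2 < ∫ x, f x ∂P - ∫ x, f x ∂N := by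
  obtain ⟨ε, hε, hPε⟩ : ∃ ε > 0, P.real univ = 1 / 2 + ε := ⟨_, sub_pos.2 hP, by ring⟩
  obtain ⟨f, hf, hf01, hfP, hfN⟩ :=
    exists_continuous_integral_separation_of_mutuallySingular hPN (by positivity : 0 < ε / 4)
  set c := 2 * |M| / ε + 1
  have hc : 0 < c := by positivity
  have hcε : c * ε = 2 * |M| + ε := by simp only [c]; field_simp
  refine ⟨c • f, c, hf.smul_left, fun x ↦ ⟨?_, ?_⟩, ?_⟩
  · simpa using mul_nonneg hc.le (hf01 x).1
  · simpa using mul_le_of_le_one_right hc.le (hf01 x).2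
  have hgap : 1 / 2 + ε / 2 < ∫ x, f x ∂P - ∫ x, f x ∂N := by linarith
  simp only [ContinuousMap.smul_apply, smul_eq_mul, integral_const_mul, ← mul_sub]
  linarith [mul_lt_mul_of_pos_left hgap hc, le_abs_self M]

end

namespace CZero

def ofHasCompactSupport (f : C(ℝ≥0, ℝ)) (hf : HasCompactSupport f) : CZero :=
  ⟨f, f.continuous, by simpa only [cocompact_eq_atTop] using hf.is_zero_at_infty⟩

def toBCF (e : CZero) : ℝ≥0 →ᵇ ℝ :=
  ZeroAtInftyContinuousMap.toBCF ⟨⟨e.1, e.2.1⟩, by simpa only [cocompact_eq_atTop] using e.2.2⟩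

lemma ciInf_nonpos (e : CZero) : ⨅ t, e.1 t ≤ 0 :=
  ge_of_tendsto' e.2.2 fun t ↦ ciInf_le e.toBCF.isBounded_range.bddBelow t

lemma ciSup_nonneg (e : CZero) : 0 ≤ ⨆ t, e.1 t :=
  le_of_tendsto' e.2.2 fun t ↦ le_ciSup e.toBCF.isBounded_range.bddAbove t

end CZero

section

variable (μ : SignedMeasure ℝ≥0)

lemma pairing_le_half_oscillation
    (hP : μ.toJordanDecomposition.posPart.real univ ≤ 1 / 2)
    (hN : μ.toJordanDecomposition.negPart.real univ ≤ 1 / 2) (e : CZero) :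
    pairing μ e.1 ≤ 1 / 2 * ((⨆ t, e.1 t) - ⨅ t, e.1 t) :=
  e.toBCF.integral_sub_integral_le_half_ciSup_sub_ciInf hP hN e.ciSup_nonneg e.ciInf_nonpos

lemma exists_pairing_sub_half_oscillation_gt
    (h : 1 / 2 < μ.toJordanDecomposition.posPart.real univ ∨
      1 / 2 < μ.toJordanDecomposition.negPart.real univ) (M : ℝ) :
    ∃ e : CZero, M < pairing μ e.1 - 1 / 2 * ((⨆ t, e.1 t) - ⨅ t, e.1 t) := by
  rcases h with hP | hN
  · obtain ⟨f, c, hf, hfc, hM⟩ := exists_continuous_integral_sub_integral_gt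
      μ.toJordanDecomposition.mutuallySingular hP M
    refine ⟨.ofHasCompactSupport f hf, ?_⟩
    have := ciSup_sub_ciInf_le_of_mem_Icc hfc
    simp only [pairing, CZero.ofHasCompactSupport]
    linarith
  · obtain ⟨f, c, hf, hfc, hM⟩ := exists_continuous_integral_sub_integral_gt
      μ.toJordanDecomposition.mutuallySingular.symm hN M
    refine ⟨.ofHasCompactSupport (-f) hf.neg, ?_⟩
    have := ciSup_sub_ciInf_le_of_mem_Icc (e := ⇑(-f)) (a := -c) (b := 0)
      fun t ↦ ⟨neg_le_neg (hfc t).2, neg_nonpos.2 (hfc t).1⟩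
    simp only [pairing, CZero.ofHasCompactSupport, ContinuousMap.neg_apply, integral_neg]
      at this ⊢
    linarith

end

theorem conjugate_fluctuation_general
    (μ : SignedMeasure ℝ≥0) :
    (((μ.toJordanDecomposition.posPart Set.univ).toReal ≤ 1 / 2 ∧
        -(1 / 2 : ℝ) ≤ -(μ.toJordanDecomposition.negPart Set.univ).toReal) →
      (⨆ e : CZero,
        ((pairing μ e.1 - (1 / 2) * ((⨆ t, e.1 t) - ⨅ t, e.1 t) : ℝ) : EReal)) = 0) ∧
    (¬((μ.toJordanDecomposition.posPart Set.univ).toReal ≤ 1 / 2 ∧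
        -(1 / 2 : ℝ) ≤ -(μ.toJordanDecomposition.negPart Set.univ).toReal) →
      (⨆ e : CZero,
        ((pairing μ e.1 - (1 / 2) * ((⨆ t, e.1 t) - ⨅ t, e.1 t) : ℝ) : EReal)) = ⊤) := by
  refine ⟨fun ⟨hP, hN⟩ ↦ le_antisymm (iSup_le fun e ↦ ?_) ?_, fun h ↦ ?_⟩
  · exact_mod_cast sub_nonpos.2 (pairing_le_half_oscillation μ hP (neg_le_neg_iff.1 hN) e)
  · exact le_iSup_of_le (.ofHasCompactSupport 0 .zero)
      (by simp [pairing, CZero.ofHasCompactSupport])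
  · refine EReal.iSup_coe_eq_top_of_forall_exists_lt
      (exists_pairing_sub_half_oscillation_gt μ ?_)
    simpa only [not_and_or, not_le, neg_le_neg_iff, measureReal_def] using h

/-- The Young–Fenchel conjugate of the fluctuation functional
`f_fl(e) = (1/2)(sup_{t≥0} e t - inf_{t≥0} e t)` on `C₀(ℝ₊)` is the indicator function of
`{μ : μ₊([0,∞)) ≤ 1/2, μ₋([0,∞)) ≥ -1/2}` (with the convention `μ = μ₊ + μ₋`, `μ₊ ≥ 0`,
`μ₋ ≤ 0`, so that `μ₋` is minus the Mathlib Jordan negative part): the supremum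
`sup_{e ∈ C₀} (∫₀^∞ e dμ - f_fl(e))` is `0` on that set and `+∞` otherwise. -/
theorem conjugate_fluctuation
    (μ : SignedMeasure ℝ≥0) (hreg : μ.totalVariation.Regular) :
    (((μ.toJordanDecomposition.posPart Set.univ).toReal ≤ 1 / 2 ∧
        -(1 / 2 : ℝ) ≤ -(μ.toJordanDecomposition.negPart Set.univ).toReal) →
      (⨆ e : CZero,
        ((pairing μ e.1 - (1 / 2) * ((⨆ t, e.1 t) - ⨅ t, e.1 t) : ℝ) : EReal)) = 0) ∧
    (¬((μ.toJordanDecomposition.posPart Set.univ).toReal ≤ 1 / 2 ∧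
        -(1 / 2 : ℝ) ≤ -(μ.toJordanDecomposition.negPart Set.univ).toReal) →
      (⨆ e : CZero,
        ((pairing μ e.1 - (1 / 2) * ((⨆ t, e.1 t) - ⨅ t, e.1 t) : ℝ) : EReal)) = ⊤) :=
  conjugate_fluctuation_general μ
end
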